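/- arXiv:2502.09569 — 2 statements merged into one kernel-verified Lean document; each statement's English description precedes it below -/
import Mathlib

section
/- Let σ ∈ (0,1), N ≥ 2, and λ ≥ (2/σ − N)^{-1} with 2/σ − N > 0. For any u ∈ [0,1]^N, every coordinate of sparsemax(u/λ) lies in [0, 1/(Nσ)]. -/
/-
Write `v = u / λ` and `κ*` for the sparsemax threshold. Since `0 ≤ u ≤ 1` and `1/λ ≤ 2/σ − N`,
every `v_i` lies in `[0, 2/σ − N]`. For nonnegative inputs the threshold satisfies `κ* ≥ −2`:
if the support is everything, `κ* = (Σ v − 2N)/N ≥ −2`; otherwise the first index outside the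
support fails the threshold test, which forces `Σ_{i ≤ k} v_{ρ(i)} ≥ 2N`, i.e. `κ* ≥ 0`.
Hence `v_i − κ* ≤ 2/σ − N + 2 ≤ 2/σ`, and dividing by `2N` gives the bound `1/(Nσ)`.
-/

open Finset

/-- Threshold set for sparsemax: `j : Fin N` encodes support size `j+1`. -/
noncomputable def thresholdSet (N : ℕ) (w : Fin N → ℝ) (ρ : Equiv.Perm (Fin N)) : Finset (Fin N) :=
  Finset.univ.filter
    (fun j => (∑ i ∈ Finset.Iic j, w (ρ i)) < 2 * (N : ℝ) + ((j : ℝ) + 1) * w (ρ j))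

noncomputable def sparsemaxThreshold (N : ℕ) (w : Fin N → ℝ) (ρ : Equiv.Perm (Fin N))
    (hne : (thresholdSet N w ρ).Nonempty) : ℝ :=
  ((∑ l ∈ Iic ((thresholdSet N w ρ).max' hne), w (ρ l)) - 2 * N) /
    (((thresholdSet N w ρ).max' hne : ℝ) + 1)

section

variable {N : ℕ} {w : Fin N → ℝ} {ρ : Equiv.Perm (Fin N)}

lemma le_sum_Iic_of_notMem_thresholdSet {j : Fin N} (hj : j ∉ thresholdSet N w ρ) :
    2 * (N : ℝ) + ((j : ℝ) + 1) * w (ρ j) ≤ ∑ i ∈ Iic j, w (ρ i) := by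
  simpa [thresholdSet] using hj

lemma two_mul_le_sum_Iic_max'_thresholdSet (hw : ∀ l, 0 ≤ w l)
    (hne : (thresholdSet N w ρ).Nonempty) (hlt : ((thresholdSet N w ρ).max' hne : ℕ) + 1 < N) :
    2 * (N : ℝ) ≤ ∑ l ∈ Iic ((thresholdSet N w ρ).max' hne), w (ρ l) := by
  set j := (thresholdSet N w ρ).max' hne
  let j' : Fin N := ⟨j + 1, hlt⟩
  have hj' : j' ∉ thresholdSet N w ρ := fun hmem => by
    have h : j' ≤ j := (thresholdSet N w ρ).le_max' j' hmem
    exact absurd (Fin.le_def.mp h) (by simp [j'])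
  have hIio : Iio j' = Iic j := by
    ext x
    simp only [mem_Iio, mem_Iic, Fin.lt_def, Fin.le_def, j']
    omega
  have hsum : ∑ l ∈ Iic j', w (ρ l) = w (ρ j') + ∑ l ∈ Iic j, w (ρ l) := by
    rw [← Iio_insert, sum_insert notMem_Iio_self, hIio]
  have hcast : (j' : ℝ) = (j : ℝ) + 1 := by simp [j']
  have key := le_sum_Iic_of_notMem_thresholdSet hj'
  rw [hsum, hcast] at key
  nlinarith [hw (ρ j')]

lemma neg_two_le_sparsemaxThreshold (hw : ∀ l, 0 ≤ w l) (hne : (thresholdSet N w ρ).Nonempty) :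
    -2 ≤ sparsemaxThreshold N w ρ hne := by
  set j := (thresholdSet N w ρ).max' hne
  have hk : (0 : ℝ) < (j : ℝ) + 1 := by positivity
  unfold sparsemaxThreshold
  rcases (Nat.succ_le_of_lt j.isLt).lt_or_eq with hlt | heq
  · have := two_mul_le_sum_Iic_max'_thresholdSet hw hne hlt
    have : 0 ≤ ((∑ l ∈ Iic j, w (ρ l)) - 2 * N) / ((j : ℝ) + 1) := div_nonneg (by linarith) hk.le
    linarith
  · have hjN : (j : ℝ) + 1 = N := by exact_mod_cast heq
    have hS : 0 ≤ ∑ l ∈ Iic j, w (ρ l) := sum_nonneg fun l _ => hw (ρ l)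
    rw [le_div_iff₀ hk]
    linarith

end

theorem sparsemax_coord_le_general (N : ℕ) (hN : 2 ≤ N) (σ lam : ℝ) (hσ : σ ∈ Set.Ioo (0 : ℝ) 1)
    (hpos : 0 < 2 / σ - N) (hlam : (2 / σ - N)⁻¹ ≤ lam)
    (u : Fin N → ℝ) (hu : ∀ i, u i ∈ Set.Icc (0 : ℝ) 1)
    (ρ : Equiv.Perm (Fin N))
    (hne : (thresholdSet N (fun i => u i / lam) ρ).Nonempty) :
    ∀ i : Fin N,
      (0 : ℝ) ≤ max 0 (u i / lam -
          ((∑ l ∈ Finset.Iic ((thresholdSet N (fun i => u i / lam) ρ).max' hne),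
              u (ρ l) / lam) - 2 * N) /
            (((thresholdSet N (fun i => u i / lam) ρ).max' hne : ℝ) + 1)) / (2 * N) ∧
      max 0 (u i / lam -
          ((∑ l ∈ Finset.Iic ((thresholdSet N (fun i => u i / lam) ρ).max' hne),
              u (ρ l) / lam) - 2 * N) /
            (((thresholdSet N (fun i => u i / lam) ρ).max' hne : ℝ) + 1)) / (2 * N)
        ≤ 1 / (N * σ) := by
  intro i
  have hσ0 : 0 < σ := hσ.1
  have hN2 : (2 : ℝ) ≤ N := by exact_mod_cast hN
  have hlam0 : 0 < lam := (inv_pos.mpr hpos).trans_le hlam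
  have hv_nonneg (l : Fin N) : 0 ≤ u l / lam := div_nonneg (hu l).1 hlam0.le
  have hv_le : u i / lam ≤ 2 / σ - N :=
    calc u i / lam ≤ 1 / lam := by gcongr; exact (hu i).2
      _ ≤ 2 / σ - N := by rw [one_div]; simpa using inv_anti₀ (inv_pos.mpr hpos) hlam
  have hκ := neg_two_le_sparsemaxThreshold hv_nonneg hne
  unfold sparsemaxThreshold at hκ
  refine ⟨by positivity, ?_⟩
  rw [div_le_iff₀ (by positivity), show 1 / ((N : ℝ) * σ) * (2 * N) = 2 / σ by field_simp]
  exact max_le (by positivity) (by linarith)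

/-- Let `σ ∈ (0,1)`, `N ≥ 2`, `λ ≥ (2/σ − N)⁻¹` with `2/σ − N > 0`. For `u ∈ [0,1]^N`,
every coordinate of `sparsemax(u/λ)` lies in `[0, 1/(Nσ)]`. Here `sparsemax(v)_i =
max{0, v_i − κ*}/(2N)` with `κ* = (∑_{i=1}^k v_{ρ(i)} − 2N)/k` and `k` the sparsemax
support size of the sorted values `v ∘ ρ`. -/
theorem sparsemax_coord_le (N : ℕ) (hN : 2 ≤ N) (σ lam : ℝ) (hσ : σ ∈ Set.Ioo (0 : ℝ) 1)
    (hpos : 0 < 2 / σ - N) (hlam : (2 / σ - N)⁻¹ ≤ lam)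
    (u : Fin N → ℝ) (hu : ∀ i, u i ∈ Set.Icc (0 : ℝ) 1)
    (ρ : Equiv.Perm (Fin N)) (hsort : Antitone (fun i => u (ρ i) / lam))
    (hne : (thresholdSet N (fun i => u i / lam) ρ).Nonempty) :
    ∀ i : Fin N,
      (0 : ℝ) ≤ max 0 (u i / lam -
          ((∑ l ∈ Finset.Iic ((thresholdSet N (fun i => u i / lam) ρ).max' hne),
              u (ρ l) / lam) - 2 * N) /
            (((thresholdSet N (fun i => u i / lam) ρ).max' hne : ℝ) + 1)) / (2 * N) ∧
      max 0 (u i / lam -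
          ((∑ l ∈ Finset.Iic ((thresholdSet N (fun i => u i / lam) ρ).max' hne),
              u (ρ l) / lam) - 2 * N) /
            (((thresholdSet N (fun i => u i / lam) ρ).max' hne : ℝ) + 1)) / (2 * N)
        ≤ 1 / (N * σ) :=
  sparsemax_coord_le_general N hN σ lam hσ hpos hlam u hu ρ hne
end

section
/- For G the cumulative distribution function of a shifted exponential distribution, G(s) = max{0, 1 − η·exp(−s/γ − 1)} with η > 0, γ > 0, the left quantile function is G^{-1}(t) = −γ(1 + log((1−t)/η)) for t ∈ (0,1), and the regularizer p ↦ ∫_{1−p}^1 G^{-1}(t) dt equals −γ p (log(p/η)) for p ∈ (0,1]. -/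
open MeasureTheory Real

/-- Left (generalized) quantile function of `G`. -/
noncomputable def leftQuantile (G : ℝ → ℝ) (t : ℝ) : ℝ := sInf {s : ℝ | t ≤ G s}

/-- `log` is interval integrable on `[0, p]`. -/
lemma log_intervalIntegrable (p : ℝ) (hp0 : 0 < p) (hp1 : p ≤ 1) :
    IntervalIntegrable Real.log volume 0 p := by
  have hg : IntervalIntegrable (fun u : ℝ => 2 * u ^ (-(1:ℝ)/2)) volume 0 p :=
    (intervalIntegral.intervalIntegrable_rpow' (by norm_num)).const_mul 2
  refine hg.mono_fun' (measurable_log.aestronglyMeasurable.restrict) ?_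
  rw [Filter.EventuallyLE, ae_restrict_iff' measurableSet_uIoc]
  filter_upwards with u hu
  rw [Set.uIoc_of_le hp0.le] at hu
  obtain ⟨hu0, hup⟩ := hu
  have hu1 : u ≤ 1 := hup.trans hp1
  have hlogle : Real.log u ≤ 0 := Real.log_nonpos hu0.le hu1
  have hsq : 0 < Real.sqrt u := Real.sqrt_pos.mpr hu0
  have h1 : Real.log ((Real.sqrt u)⁻¹) ≤ (Real.sqrt u)⁻¹ - 1 :=
    Real.log_le_sub_one_of_pos (by positivity)
  have h2 : Real.log ((Real.sqrt u)⁻¹) = -(Real.log u) / 2 := by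
    rw [Real.log_inv, Real.log_sqrt hu0.le]; ring
  have h3 : u ^ (-(1:ℝ)/2) = (Real.sqrt u)⁻¹ := by
    rw [Real.sqrt_eq_rpow, ← Real.rpow_neg hu0.le]
    norm_num
  have : ‖Real.log u‖ = -(Real.log u) := by
    rw [Real.norm_eq_abs, abs_of_nonpos hlogle]
  rw [this, h3]
  nlinarith [h1, h2, hsq]

/-- `∫ x in 0..p, log x = p * log p - p`. -/
lemma integral_log_from_zero' (p : ℝ) (hp0 : 0 < p) (hp1 : p ≤ 1) :
    ∫ x in (0:ℝ)..p, Real.log x = p * Real.log p - p := by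
  have hderiv : ∀ x ∈ Set.Ioo (0:ℝ) p,
      HasDerivAt (fun x : ℝ => x * Real.log x - x) (Real.log x) x := by
    intro x hx
    have h := (Real.hasDerivAt_mul_log hx.1.ne').sub (hasDerivAt_id' x)
    exact h.congr_deriv (by ring)
  have h0 : Filter.Tendsto (fun x : ℝ => x * Real.log x - x) (nhdsWithin 0 (Set.Ioi 0))
      (nhds 0) := by
    have hc : Continuous fun x : ℝ => x * Real.log x - x :=
      Real.continuous_mul_log.sub continuous_id
    have := hc.continuousAt (x := 0).continuousWithinAt.tendsto (s := Set.Ioi 0)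
    simpa [Real.log_zero] using this
  have hp : Filter.Tendsto (fun x : ℝ => x * Real.log x - x) (nhdsWithin p (Set.Iio p))
      (nhds (p * Real.log p - p)) := by
    have : ContinuousAt (fun x : ℝ => x * Real.log x - x) p :=
      ((continuousAt_id.mul (Real.continuousAt_log hp0.ne')).sub continuousAt_id)
    exact this.continuousWithinAt.tendsto
  have := intervalIntegral.integral_eq_sub_of_hasDerivAt_of_tendsto hp0 hderiv
    (log_intervalIntegrable p hp0 hp1) h0 hp
  simpa using this

/-- For the shifted exponential CDF `G(s) = max{0, 1 − η e^{−s/γ − 1}}` with `η, γ > 0`: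
the left quantile is `G⁻¹(t) = −γ(1 + log((1−t)/η))` on `(0,1)`, and the regularizer
`p ↦ ∫_{1−p}^1 G⁻¹(t) dt` equals `−γ p log(p/η)` for `p ∈ (0,1]`. -/
theorem exponential_quantile_and_regularizer (η γ : ℝ) (hη : 0 < η) (hγ : 0 < γ) :
    (∀ t ∈ Set.Ioo (0 : ℝ) 1,
        leftQuantile (fun s => max 0 (1 - η * Real.exp (-s / γ - 1))) t =
          -γ * (1 + Real.log ((1 - t) / η))) ∧
    (∀ p ∈ Set.Ioc (0 : ℝ) 1,
        (∫ t in Set.Ioc (1 - p) 1,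
            leftQuantile (fun s => max 0 (1 - η * Real.exp (-s / γ - 1))) t) =
          -γ * p * Real.log (p / η)) := by
  have key : ∀ t ∈ Set.Ioo (0 : ℝ) 1,
      leftQuantile (fun s => max 0 (1 - η * Real.exp (-s / γ - 1))) t =
        -γ * (1 + Real.log ((1 - t) / η)) := by
    intro t ht
    obtain ⟨ht0, ht1⟩ := ht
    have h1t : 0 < 1 - t := by linarith
    set L := Real.log ((1 - t) / η) with hLdef
    have hL : Real.exp L = (1 - t) / η := Real.exp_log (by positivity)
    have hset : {s : ℝ | t ≤ max 0 (1 - η * Real.exp (-s / γ - 1))} =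
        Set.Ici (-γ * (1 + L)) := by
      ext s
      simp only [Set.mem_setOf_eq, Set.mem_Ici]
      constructor
      · intro h
        have h2 : η * Real.exp (-s / γ - 1) ≤ 1 - t := by
          rcases le_max_iff.mp h with h' | h'
          · linarith
          · linarith
        have h3 : Real.exp (-s / γ - 1) ≤ (1 - t) / η := by
          rw [le_div_iff₀ hη]; nlinarith
        have h4 : -s / γ - 1 ≤ L := Real.exp_le_exp.mp (by rw [hL]; exact h3)
        have h5 : -s / γ ≤ L + 1 := by linarith
        have h6 : -s ≤ (L + 1) * γ := (div_le_iff₀ hγ).mp h5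
        linarith
      · intro h
        have h5 : -s ≤ (L + 1) * γ := by nlinarith
        have h4 : -s / γ - 1 ≤ L := by
          have := (div_le_iff₀ hγ).mpr h5
          linarith
        have h3 : Real.exp (-s / γ - 1) ≤ (1 - t) / η := by
          rw [← hL]; exact Real.exp_le_exp.mpr h4
        have h2 : η * Real.exp (-s / γ - 1) ≤ 1 - t := by
          have := (le_div_iff₀ hη).mp h3
          nlinarith
        exact le_max_of_le_right (by linarith)
    unfold leftQuantile
    rw [hset, csInf_Ici]
  refine ⟨key, ?_⟩
  intro p hp
  obtain ⟨hp0, hp1⟩ := hp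
  have hps : Set.Ioo (1 - p) 1 ⊆ Set.Ioo (0:ℝ) 1 := by
    intro t ht
    exact ⟨lt_of_le_of_lt (by linarith) ht.1, ht.2⟩
  -- replace the quantile by its closed form on the interval
  have step1 : (∫ t in Set.Ioc (1 - p) 1,
      leftQuantile (fun s => max 0 (1 - η * Real.exp (-s / γ - 1))) t) =
      ∫ t in Set.Ioc (1 - p) 1, -γ * (1 + Real.log ((1 - t) / η)) := by
    rw [MeasureTheory.integral_Ioc_eq_integral_Ioo,
        MeasureTheory.integral_Ioc_eq_integral_Ioo]
    exact setIntegral_congr_fun measurableSet_Ioo (fun t ht => key t (hps ht))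
  rw [step1]
  have hle : (1 : ℝ) - p ≤ 1 := by linarith
  rw [← intervalIntegral.integral_of_le hle]
  -- substitute u = 1 - t
  have step2 : (∫ t in (1 - p)..1, -γ * (1 + Real.log ((1 - t) / η))) =
      ∫ u in (0:ℝ)..p, -γ * (1 + Real.log (u / η)) := by
    have := intervalIntegral.integral_comp_sub_left
      (fun u : ℝ => -γ * (1 + Real.log (u / η))) 1 (a := 1 - p) (b := 1)
    simpa using this
  rw [step2]
  -- rewrite integrand a.e.
  have step3 : (∫ u in (0:ℝ)..p, -γ * (1 + Real.log (u / η))) =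
      ∫ u in (0:ℝ)..p, ((-γ + γ * Real.log η) + (-γ) * Real.log u) := by
    apply intervalIntegral.integral_congr_ae
    have h0 : ∀ᵐ u : ℝ, u ≠ (0:ℝ) := by
      refine (MeasureTheory.ae_iff).mpr ?_
      simp only [not_not]
      have : {a : ℝ | a = 0} = {(0:ℝ)} := by ext a; simp
      rw [this]
      exact measure_singleton 0
    filter_upwards [h0] with u hu _
    rw [Real.log_div hu hη.ne']
    ring
  rw [step3]
  have hlogint : IntervalIntegrable Real.log volume 0 p := log_intervalIntegrable p hp0 hp1
  rw [intervalIntegral.integral_add intervalIntegrable_const (hlogint.const_mul _),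
      intervalIntegral.integral_const, intervalIntegral.integral_const_mul,
      integral_log_from_zero' p hp0 hp1]
  rw [Real.log_div hp0.ne' hη.ne']
  simp only [sub_zero, smul_eq_mul]
  ring
end
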